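/- Let b : 𝔻 → ℂ be analytic with |b(ζ)| < 1 for almost every ζ ∈ 𝕋, and for each α ∈ 𝕋 let (μ_α)_a be the absolutely continuous part of the Aleksandrov–Clark measure of b at α, i.e. the measure with density (1 − |b(ζ)|²)/|α − b(ζ)|² with respect to normalized Lebesgue measure m on 𝕋. Then ∫_𝕋 (μ_α)_a(𝕋) dm(α) = 1. In particular, for m-almost every α ∈ 𝕋 the measure μ_α is absolutely continuous (its singular part has measure zero). -/

import Mathlib

/-!
For `‖w‖ < 1` the Poisson kernel `(1 - ‖w‖²)/‖α - w‖²` is the density of a probability measure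
in `α ∈ 𝕋` (Poisson formula for the harmonic function `1`). Integrating first in `α` (Tonelli),
the double integral of the densities of the absolutely continuous parts is therefore
`m(𝕋) = 1`. Since each `(μ_α)_a(𝕋) ≤ μ_α(𝕋) = 1`, an average equal to `1` forces
`(μ_α)_a(𝕋) = 1`, i.e. `(μ_α)_s(𝕋) = 0`, for almost every `α`.
-/

open Complex MeasureTheory Set Metric Filter
open scoped Real Topology ENNReal

lemma poissonKernel_zero_exp_mul_I (w : ℂ) (θ : ℝ) :
    poissonKernel 0 w (exp (θ * I)) = (1 - ‖w‖ ^ 2) / ‖exp (θ * I) - w‖ ^ 2 := by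
  simp [poissonKernel_def, norm_exp_ofReal_mul_I]

lemma poissonKernel_zero_exp_mul_I_nonneg {w : ℂ} (hw : ‖w‖ ≤ 1) (θ : ℝ) :
    0 ≤ poissonKernel 0 w (exp (θ * I)) := by
  rw [poissonKernel_zero_exp_mul_I]
  exact div_nonneg (by nlinarith [norm_nonneg w]) (sq_nonneg _)

lemma integral_Ioc_poissonKernel_zero_exp_mul_I {w : ℂ} (hw : ‖w‖ < 1) :
    ∫ θ in Ioc 0 (2 * π), poissonKernel 0 w (exp (θ * I)) / (2 * π) = 1 := by
  have h := (InnerProductSpace.harmonicContOnCl_const (c := (1 : ℝ))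
    (s := ball (0 : ℂ) 1)).circleAverage_poissonKernel_smul (mem_ball_zero_iff.2 hw)
  rw [Real.circleAverage_def, intervalIntegral.integral_of_le Real.two_pi_pos.le] at h
  rw [integral_div]
  simpa [circleMap_zero, div_eq_inv_mul] using h

lemma measurable_poissonKernel_zero_exp_mul_I :
    Measurable fun q : ℂ × ℝ => poissonKernel 0 q.1 (exp (q.2 * I)) := by
  unfold poissonKernel
  fun_prop

lemma aemeasurable_of_ae_tendsto_radial {E : Type*} [TopologicalSpace E]
    [TopologicalSpace.PseudoMetrizableSpace E] [MeasurableSpace E] [BorelSpace E]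
    {b : ℂ → E} {B : ℝ → E} {μ : Measure ℝ} (hb : ContinuousOn b (ball 0 1))
    (hB : ∀ᵐ (t : ℝ) ∂μ, Tendsto (fun r : ℝ => b (r * exp ((t : ℂ) * I))) (𝓝[<] 1) (𝓝 (B t))) :
    AEMeasurable B μ := by
  obtain ⟨r, -, hr01, hr⟩ := exists_seq_strictMono_tendsto' (zero_lt_one' ℝ)
  have hr' : Tendsto r atTop (𝓝[<] 1) :=
    tendsto_nhdsWithin_of_tendsto_nhds_of_eventually_within _ hr
      (Eventually.of_forall fun n => (hr01 n).2)
  have hmem : ∀ n (t : ℝ), (r n : ℂ) * exp (t * I) ∈ ball (0 : ℂ) 1 := fun n t => by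
    simpa [norm_exp_ofReal_mul_I, abs_of_pos (hr01 n).1] using (hr01 n).2
  refine aemeasurable_of_tendsto_metrizable_ae atTop
    (f := fun n (t : ℝ) => b (r n * exp (t * I))) (fun n => ?_) ?_
  · exact (hb.comp_continuous (by fun_prop) (hmem n)).measurable.aemeasurable
  · filter_upwards [hB] with t ht using ht.comp hr'

section PoissonTonelli

variable {X : Type*} [MeasurableSpace X] {ν : Measure X} {B : X → ℂ}

lemma aemeasurable_uncurry_ofReal_poissonKernel_zero_exp_mul_I (hBm : AEMeasurable B ν)
    (ρ : Measure ℝ) :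
    AEMeasurable (Function.uncurry fun (θ : ℝ) (x : X) =>
      ENNReal.ofReal (poissonKernel 0 (B x) (exp (θ * I)) / (2 * π))) (ρ.prod ν) := by
  have hP : Measurable fun q : ℂ × ℝ =>
      ENNReal.ofReal (poissonKernel 0 q.1 (exp (q.2 * I)) / (2 * π)) :=
    ENNReal.measurable_ofReal.comp (measurable_poissonKernel_zero_exp_mul_I.div_const _)
  exact hP.comp_aemeasurable (f := fun p : ℝ × X => (B p.2, p.1))
    (hBm.comp_snd.prodMk measurable_fst.aemeasurable)

lemma lintegral_lintegral_poissonKernel_zero_exp_mul_I [SFinite ν] (hBm : AEMeasurable B ν)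
    (hB : ∀ᵐ x ∂ν, ‖B x‖ < 1) :
    ∫⁻ θ in Ioc 0 (2 * π), ∫⁻ x, ENNReal.ofReal (poissonKernel 0 (B x) (exp (θ * I)) / (2 * π)) ∂ν
      = ν univ := by
  rw [lintegral_lintegral_swap (aemeasurable_uncurry_ofReal_poissonKernel_zero_exp_mul_I hBm _),
    ← lintegral_one]
  refine lintegral_congr_ae ?_
  filter_upwards [hB] with x hx
  have hP := integral_Ioc_poissonKernel_zero_exp_mul_I hx
  rw [← ofReal_integral_eq_lintegral_ofReal (Integrable.of_integral_ne_zero (by simp [hP]))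
    (ae_of_all _ fun θ =>
      div_nonneg (poissonKernel_zero_exp_mul_I_nonneg hx.le θ) Real.two_pi_pos.le),
    hP, ENNReal.ofReal_one]

lemma integral_integral_poissonKernel_zero_exp_mul_I [IsFiniteMeasure ν] (hBm : AEMeasurable B ν)
    (hB : ∀ᵐ x ∂ν, ‖B x‖ < 1) :
    ∫ θ in Ioc 0 (2 * π), ∫ x, poissonKernel 0 (B x) (exp (θ * I)) / (2 * π) ∂ν = ν.real univ := by
  have hF := (aemeasurable_uncurry_ofReal_poissonKernel_zero_exp_mul_I hBm
    (volume.restrict (Ioc 0 (2 * π)))).lintegral_prod_right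
  have htot := lintegral_lintegral_poissonKernel_zero_exp_mul_I hBm hB
  calc ∫ θ in Ioc 0 (2 * π), ∫ x, poissonKernel 0 (B x) (exp (θ * I)) / (2 * π) ∂ν
      = ∫ θ in Ioc 0 (2 * π),
          (∫⁻ x, ENNReal.ofReal (poissonKernel 0 (B x) (exp (θ * I)) / (2 * π)) ∂ν).toReal := by
        refine integral_congr_ae (ae_of_all _ fun θ => integral_eq_lintegral_of_nonneg_ae ?_ ?_)
        · filter_upwards [hB] with x hx
          exact div_nonneg (poissonKernel_zero_exp_mul_I_nonneg hx.le θ) Real.two_pi_pos.le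
        · exact ((measurable_poissonKernel_zero_exp_mul_I.comp_aemeasurable
            (hBm.prodMk aemeasurable_const)).div_const _).aestronglyMeasurable
    _ = ν.real univ := by
        rw [integral_toReal hF (ae_lt_top' hF (by rw [htot]; exact measure_ne_top ν univ)), htot,
          measureReal_def]

end PoissonTonelli

lemma ae_singularPart_eq_zero_of_le_lintegral_lintegral_rnDeriv {Θ X : Type*}
    [MeasurableSpace Θ] [MeasurableSpace X] {ρ : Measure Θ} [IsFiniteMeasure ρ]
    {μ : Θ → Measure X} (hμ : ∀ θ, IsProbabilityMeasure (μ θ)) {ν : Measure X} [SigmaFinite ν]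
    (h : ρ univ ≤ ∫⁻ θ, ∫⁻ x, (μ θ).rnDeriv ν x ∂ν ∂ρ) :
    ∀ᵐ θ ∂ρ, (μ θ).singularPart ν = 0 := by
  have hle : ∀ θ, ∫⁻ x, (μ θ).rnDeriv ν x ∂ν ≤ 1 := fun θ =>
    Measure.lintegral_rnDeriv_le.trans (hμ θ).measure_univ.le
  have hfin : ∫⁻ θ, ∫⁻ x, (μ θ).rnDeriv ν x ∂ν ∂ρ ≠ ∞ :=
    ((lintegral_mono hle).trans_lt (by simp [measure_lt_top])).ne
  filter_upwards [ae_eq_of_ae_le_of_lintegral_le (ae_of_all _ hle) hfin aemeasurable_const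
    (by simpa using h)] with θ hθ
  have hdecomp := congrArg (· univ) ((μ θ).haveLebesgueDecomposition_add ν)
  simp only [Measure.coe_add, Pi.add_apply, measure_univ, withDensity_apply _ MeasurableSet.univ,
    setLIntegral_univ, hθ] at hdecomp
  exact Measure.measure_univ_eq_zero.mp
    ((ENNReal.add_left_inj ENNReal.one_ne_top).mp (hdecomp.symm.trans (zero_add 1).symm))

theorem stmt_0_general (b : ℂ → ℂ) (B : ℝ → ℂ)
    (hb : AnalyticOn ℂ b (ball 0 1))
    (hB : ∀ᵐ t ∂(volume.restrict (Ioc 0 (2 * Real.pi))),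
      Tendsto (fun r : ℝ => b (Complex.ofReal r * Complex.exp (Complex.ofReal t * Complex.I)))
        (nhdsWithin 1 (Iio 1)) (nhds (B t)))
    (hB1 : ∀ᵐ t ∂(volume.restrict (Ioc 0 (2 * Real.pi))), ‖B t‖ < 1)
    (μ : ℝ → Measure ℝ)
    (hprob : ∀ θ, IsProbabilityMeasure (μ θ))
    (hdens : ∀ θ, (μ θ).rnDeriv (volume.restrict (Ioc 0 (2 * Real.pi)))
      =ᵐ[volume.restrict (Ioc 0 (2 * Real.pi))] fun t =>
        ENNReal.ofReal ((1 - ‖B t‖ ^ 2) /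
          ‖Complex.exp (Complex.ofReal θ * Complex.I) - B t‖ ^ 2 /
            (2 * Real.pi))) :
    (∫ θ in Ioc 0 (2 * Real.pi),
        (∫ t in Ioc 0 (2 * Real.pi),
          (1 - ‖B t‖ ^ 2) /
            ‖Complex.exp (Complex.ofReal θ * Complex.I) - B t‖ ^ 2 /
              (2 * Real.pi)) / (2 * Real.pi)) = 1 ∧
    ∀ᵐ θ ∂(volume.restrict (Ioc 0 (2 * Real.pi))),
      (μ θ).singularPart (volume.restrict (Ioc 0 (2 * Real.pi))) = 0 := by
  have hBm : AEMeasurable B (volume.restrict (Ioc 0 (2 * π))) :=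
    aemeasurable_of_ae_tendsto_radial hb.continuousOn hB
  simp only [← poissonKernel_zero_exp_mul_I] at hdens ⊢
  refine ⟨?_, ae_singularPart_eq_zero_of_le_lintegral_lintegral_rnDeriv hprob ?_⟩
  · rw [integral_div, integral_integral_poissonKernel_zero_exp_mul_I hBm hB1]
    simp [Real.two_pi_pos.le, Real.two_pi_pos.ne']
  · rw [← lintegral_lintegral_poissonKernel_zero_exp_mul_I hBm hB1]
    exact (lintegral_congr fun θ => lintegral_congr_ae (hdens θ)).ge

/-- Let `b : 𝔻 → ℂ` be analytic with boundary values `B` satisfying `|B(ζ)| < 1` a.e. on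
the circle (parametrized by `t ↦ exp(it)`, `t ∈ (0, 2π]`, with normalized measure
`m = volume/(2π)`), and for each `α = exp(iθ) ∈ 𝕋` let `μ_θ` be the Aleksandrov–Clark
probability measure of `b` at `α`, whose absolutely continuous part has density
`(1 − |B(ζ)|²)/|α − B(ζ)|²` with respect to `m`.  Then
`∫_𝕋 (μ_α)_a(𝕋) dm(α) = 1`; in particular, for `m`-a.e. `α` the measure `μ_α` is
absolutely continuous (its singular part vanishes). -/
theorem stmt_0 (b : ℂ → ℂ) (B : ℝ → ℂ)
    (hb : AnalyticOn ℂ b (ball 0 1))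
    (hmap : ∀ z ∈ ball (0 : ℂ) 1, ‖b z‖ < 1)
    (hB : ∀ᵐ t ∂(volume.restrict (Ioc 0 (2 * Real.pi))),
      Tendsto (fun r : ℝ => b (Complex.ofReal r * Complex.exp (Complex.ofReal t * Complex.I)))
        (nhdsWithin 1 (Iio 1)) (nhds (B t)))
    (hB1 : ∀ᵐ t ∂(volume.restrict (Ioc 0 (2 * Real.pi))), ‖B t‖ < 1)
    (μ : ℝ → Measure ℝ)
    (hprob : ∀ θ, IsProbabilityMeasure (μ θ))
    (hdens : ∀ θ, (μ θ).rnDeriv (volume.restrict (Ioc 0 (2 * Real.pi)))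
      =ᵐ[volume.restrict (Ioc 0 (2 * Real.pi))] fun t =>
        ENNReal.ofReal ((1 - ‖B t‖ ^ 2) /
          ‖Complex.exp (Complex.ofReal θ * Complex.I) - B t‖ ^ 2 /
            (2 * Real.pi))) :
    (∫ θ in Ioc 0 (2 * Real.pi),
        (∫ t in Ioc 0 (2 * Real.pi),
          (1 - ‖B t‖ ^ 2) /
            ‖Complex.exp (Complex.ofReal θ * Complex.I) - B t‖ ^ 2 /
              (2 * Real.pi)) / (2 * Real.pi)) = 1 ∧
    ∀ᵐ θ ∂(volume.restrict (Ioc 0 (2 * Real.pi))),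
      (μ θ).singularPart (volume.restrict (Ioc 0 (2 * Real.pi))) = 0 :=
  stmt_0_general b B hb hB hB1 μ hprob hdens
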